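/- arXiv:2007.00802 — 5 statements merged into one kernel-verified Lean document; each statement's English description precedes it below -/
import Mathlib

section
/- Let K be a complete non-archimedean field with residue characteristic p, and let F = (F_1,...,F_N) be a polynomial endomorphism of A^N over the valuation ring K° such that each F_i = G_i^p + ϖ f_i where |p| ≤ |ϖ| < 1, f_i has coefficients in K°, deg f_i < deg G_i^p, and G_i(X_1,...,X_N) = Σ_{j=1}^{m_i} c_{i,j} X_i^{q_{i,j}} with |c_{i,j}| = 1 and q_{i,j} strictly increasing powers of p. Then for any point x = (x_1,...,x_N) with max_i |x_i| > 1, we have max_i |F_i(x)| > max_i |x_i| > 1; in particular F maps the complement of (K°)^N into itself. -/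
open IsUltrametricDist

/-- Norm of evaluation of a polynomial with coefficients of norm ≤ 1 at a point with
coordinates bounded by `r ≥ 1` is at most `r ^ totalDegree`. -/
lemma aux_eval_le {K : Type*} [NontriviallyNormedField K] [IsUltrametricDist K]
    {N : ℕ} (f : MvPolynomial (Fin N) K) (x : Fin N → K) (r : ℝ) (hr : 1 ≤ r)
    (hco : ∀ d, ‖MvPolynomial.coeff d f‖ ≤ 1) (hx : ∀ i, ‖x i‖ ≤ r) :
    ‖MvPolynomial.eval x f‖ ≤ r ^ f.totalDegree := by
  have hr0 : 0 ≤ r := le_trans zero_le_one hr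
  rw [MvPolynomial.eval_eq' x f]
  obtain ⟨d, hd1, hd2⟩ := exists_norm_finset_sum_le f.support
    (fun d => MvPolynomial.coeff d f * ∏ i, x i ^ d i)
  rcases Finset.eq_empty_or_nonempty f.support with h | h
  · rw [h, Finset.sum_empty, norm_zero]
    positivity
  · refine le_trans hd2 ?_
    have hds : (∑ i, d i) ≤ f.totalDegree := by
      have := MvPolynomial.le_totalDegree (hd1 h)
      rwa [Finsupp.sum_fintype _ _ (fun _ => rfl)] at this
    calc ‖MvPolynomial.coeff d f * ∏ i, x i ^ d i‖
        = ‖MvPolynomial.coeff d f‖ * ‖∏ i, x i ^ d i‖ := norm_mul _ _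
      _ ≤ 1 * ∏ i, r ^ d i := by
          refine mul_le_mul (hco d) ?_ (norm_nonneg _) zero_le_one
          rw [norm_prod]
          refine Finset.prod_le_prod (fun i _ => norm_nonneg _) (fun i _ => ?_)
          rw [norm_pow]
          exact pow_le_pow_left₀ (norm_nonneg _) (hx i) _
      _ = r ^ (∑ i, d i) := by rw [one_mul, Finset.prod_pow_eq_pow_sum]
      _ ≤ r ^ f.totalDegree := pow_le_pow_right₀ hr hds

/-- A lift of p-th power of the special shape (Lemma `keylemma`) is a
restricted lift of p-th power: for any point `x` with `max_i ‖x i‖ > 1`, attained at `i₀`,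
some coordinate of `F(x)` has norm strictly bigger than `max_i ‖x i‖ > 1`. -/
theorem statement0 {K : Type*} [NontriviallyNormedField K] [IsUltrametricDist K]
    [CompleteSpace K]
    (p : ℕ) (hp : p.Prime) (hpnorm : ‖(p : K)‖ < 1)
    {N : ℕ} (F G f : Fin N → MvPolynomial (Fin N) K)
    (ϖ : K) (hϖ₁ : ‖(p : K)‖ ≤ ‖ϖ‖) (hϖ₂ : ‖ϖ‖ < 1)
    (m : Fin N → ℕ) (hm : ∀ i, 0 < m i)
    (c : Fin N → ℕ → K) (q : Fin N → ℕ → ℕ)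
    (hc : ∀ i j, j < m i → ‖c i j‖ = 1)
    (hq : ∀ i j, j < m i → ∃ e : ℕ, q i j = p ^ e)
    (hqmono : ∀ i j j', j < j' → j' < m i → q i j < q i j')
    (hG : ∀ i, G i = ∑ j ∈ Finset.range (m i),
      MvPolynomial.C (c i j) * MvPolynomial.X i ^ (q i j))
    (hfcoeff : ∀ i d, ‖MvPolynomial.coeff d (f i)‖ ≤ 1)
    (hdeg : ∀ i, (f i).totalDegree < ((G i) ^ p).totalDegree)
    (hF : ∀ i, F i = (G i) ^ p + MvPolynomial.C ϖ * f i)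
    (x : Fin N → K) (i₀ : Fin N) (hx : 1 < ‖x i₀‖) (hmax : ∀ i, ‖x i‖ ≤ ‖x i₀‖) :
    ∃ j, ‖x i₀‖ < ‖MvPolynomial.eval x (F j)‖ ∧ 1 < ‖MvPolynomial.eval x (F j)‖ := by
  set r : ℝ := ‖x i₀‖ with hr
  have hr0 : 0 < r := lt_trans zero_lt_one hx
  obtain ⟨M, hM⟩ : ∃ M, m i₀ = M + 1 := ⟨m i₀ - 1, (Nat.succ_pred_eq_of_pos (hm i₀)).symm⟩
  set Q : ℕ := q i₀ M with hQ
  have hQ1 : 1 ≤ Q := by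
    obtain ⟨e, he⟩ := hq i₀ M (by omega)
    rw [hQ, he]
    exact Nat.one_le_pow _ _ hp.pos
  -- norm of eval of G i₀ is r ^ Q
  have hGeval : ‖MvPolynomial.eval x (G i₀)‖ = r ^ Q := by
    have hterm : ∀ j, j < m i₀ → ‖c i₀ j * (x i₀) ^ (q i₀ j)‖ = r ^ (q i₀ j) := by
      intro j hj
      rw [norm_mul, norm_pow, hc i₀ j hj, one_mul]
    have heval : MvPolynomial.eval x (G i₀)
        = (∑ j ∈ Finset.range M, c i₀ j * (x i₀) ^ (q i₀ j)) + c i₀ M * (x i₀) ^ Q := by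
      rw [hG i₀, hM, map_sum, Finset.sum_range_succ]
      simp [hQ]
    have hrest : ‖∑ j ∈ Finset.range M, c i₀ j * (x i₀) ^ (q i₀ j)‖ < r ^ Q := by
      obtain ⟨b, hb1, hb2⟩ := exists_norm_finset_sum_le (Finset.range M)
        (fun j => c i₀ j * (x i₀) ^ (q i₀ j))
      rcases Nat.eq_zero_or_pos M with h | h
      · subst h; simpa using pow_pos hr0 Q
      · have hbM : b < M := Finset.mem_range.mp (hb1 ⟨0, Finset.mem_range.mpr h⟩)
        refine lt_of_le_of_lt hb2 ?_
        rw [hterm b (by omega)]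
        exact pow_lt_pow_right₀ hx (hqmono i₀ b M hbM (by omega))
    have hlast : ‖c i₀ M * (x i₀) ^ Q‖ = r ^ Q := hterm M (by omega)
    rw [heval, norm_add_eq_max_of_norm_ne_norm (by rw [hlast]; exact ne_of_lt hrest),
      hlast, max_eq_right (le_of_lt hrest)]
  -- degree bound for G ^ p
  have hdegG : (G i₀).totalDegree ≤ Q := by
    rw [hG i₀]
    refine le_trans (MvPolynomial.totalDegree_finset_sum _ _) (Finset.sup_le fun j hj => ?_)
    have hjm : j < m i₀ := Finset.mem_range.mp hj
    refine le_trans (MvPolynomial.totalDegree_mul _ _) ?_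
    rw [MvPolynomial.totalDegree_C, zero_add]
    refine le_trans (MvPolynomial.totalDegree_X_pow _ _).le ?_
    rcases lt_or_eq_of_le (Nat.lt_succ_iff.mp (hM ▸ hjm)) with h | h
    · exact le_of_lt (hqmono i₀ j M h (by omega))
    · rw [h]
  have hdegf : (f i₀).totalDegree ≤ p * Q := by
    refine le_trans (le_of_lt (hdeg i₀)) ?_
    refine le_trans (MvPolynomial.totalDegree_pow _ _) ?_
    exact Nat.mul_le_mul_left p hdegG
  -- norm of error term
  have herr : ‖MvPolynomial.eval x (MvPolynomial.C ϖ * f i₀)‖ < r ^ (p * Q) := by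
    rw [map_mul, MvPolynomial.eval_C, norm_mul]
    calc ‖ϖ‖ * ‖MvPolynomial.eval x (f i₀)‖
        ≤ ‖ϖ‖ * r ^ (f i₀).totalDegree := by
          refine mul_le_mul_of_nonneg_left ?_ (norm_nonneg _)
          exact aux_eval_le (f i₀) x r (le_of_lt hx) (hfcoeff i₀) hmax
      _ ≤ ‖ϖ‖ * r ^ (p * Q) := by
          refine mul_le_mul_of_nonneg_left ?_ (norm_nonneg _)
          exact pow_le_pow_right₀ (le_of_lt hx) hdegf
      _ < 1 * r ^ (p * Q) := by
          exact mul_lt_mul_of_pos_right hϖ₂ (pow_pos hr0 _)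
      _ = r ^ (p * Q) := one_mul _
  -- norm of main term
  have hmain : ‖MvPolynomial.eval x ((G i₀) ^ p)‖ = r ^ (p * Q) := by
    rw [map_pow, norm_pow, hGeval, ← pow_mul, mul_comm Q p]
  refine ⟨i₀, ?_⟩
  have hFeval : ‖MvPolynomial.eval x (F i₀)‖ = r ^ (p * Q) := by
    rw [hF i₀, map_add,
      norm_add_eq_max_of_norm_ne_norm (by rw [hmain]; exact (ne_of_lt herr).symm),
      hmain, max_eq_left (le_of_lt herr)]
  have h2 : 2 ≤ p * Q := le_trans hp.two_le (Nat.le_mul_of_pos_right p hQ1)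
  constructor
  · rw [hFeval]
    calc r = r ^ 1 := (pow_one r).symm
      _ < r ^ (p * Q) := pow_lt_pow_right₀ hx (by omega)
  · rw [hFeval]
    exact lt_of_lt_of_le hx (le_trans (le_of_eq (pow_one r).symm)
      (pow_le_pow_right₀ (le_of_lt hx) (by omega)))
end

section
/- Let K be a complete algebraically closed non-archimedean field with |p| < 1, and let F = (F_1,...,F_N) where F_i = G_i^p + ϖ f_i with G_i, f_i ∈ K°[X_1,...,X_N] and |p| ≤ |ϖ| < 1. Suppose x_0 ∈ (K°)^N is a fixed point of F. Then for every x ∈ (K°)^N with red(x) = red(x_0) and x ≠ x_0, one has ‖F(x) - F(x_0)‖ < ‖x - x_0‖, where ‖·‖ is the sup norm. In particular F is attracting on the residue disc of x_0. -/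
/-!
On the closed unit ball of an ultrametric ring, multiplication is 1-Lipschitz for the distance
`‖a - b‖`, hence so is evaluation of any polynomial with integral coefficients. For the `p`-th
power one gains more: expanding `(b + h)^p`, every mixed term carries a binomial coefficient
divisible by `p`, so `‖a^p - b^p‖ ≤ max (‖p‖ ‖a - b‖) (‖a - b‖^p)`. For `F = G^p + ϖ f` with
`‖p‖ ≤ ‖ϖ‖ < 1` this gives `‖F(x) - F(x₀)‖ ≤ max (‖ϖ‖ δ) (δ^p)` with `δ = ‖x - x₀‖ < 1`,
which is strictly smaller than `δ` as soon as `δ > 0`.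
-/

open Finset MvPolynomial
open IsUltrametricDist (norm_add_le_max norm_natCast_le_one norm_sum_le_of_forall_le_of_nonneg)

section UnitBall

variable {R : Type*} [SeminormedCommRing R]

lemma norm_prod_le_one [NormOneClass R] {ι : Type*} (s : Finset ι) {a : ι → R}
    (ha : ∀ i ∈ s, ‖a i‖ ≤ 1) : ‖∏ i ∈ s, a i‖ ≤ 1 :=
  prod_induction a (‖·‖ ≤ 1)
    (fun _ _ hx hy => (norm_mul_le _ _).trans (mul_le_one₀ hx (norm_nonneg _) hy)) norm_one.le ha

lemma norm_pow_le_one [NormOneClass R] {a : R} (ha : ‖a‖ ≤ 1) (n : ℕ) : ‖a ^ n‖ ≤ 1 :=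
  (norm_pow_le _ _).trans (pow_le_one₀ (norm_nonneg _) ha)

variable [IsUltrametricDist R]

lemma norm_mul_sub_mul_le_max {a b c d : R} (ha : ‖a‖ ≤ 1) (hd : ‖d‖ ≤ 1) :
    ‖a * b - c * d‖ ≤ max ‖a - c‖ ‖b - d‖ := by
  rw [show a * b - c * d = a * (b - d) + (a - c) * d by ring, max_comm]
  refine (norm_add_le_max _ _).trans (max_le_max ?_ ?_)
  · exact (norm_mul_le _ _).trans (mul_le_of_le_one_left (norm_nonneg _) ha)
  · exact (norm_mul_le _ _).trans (mul_le_of_le_one_right (norm_nonneg _) hd)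

variable [NormOneClass R]

lemma norm_prod_sub_prod_le {ι : Type*} (s : Finset ι) {a b : ι → R}
    (ha : ∀ i ∈ s, ‖a i‖ ≤ 1) (hb : ∀ i ∈ s, ‖b i‖ ≤ 1) {δ : ℝ} (hδ : 0 ≤ δ)
    (hab : ∀ i ∈ s, ‖a i - b i‖ ≤ δ) :
    ‖∏ i ∈ s, a i - ∏ i ∈ s, b i‖ ≤ δ := by
  classical
  induction s using Finset.induction with
  | empty => simpa using hδ
  | insert c s hcs ih =>
    simp only [mem_insert, forall_eq_or_imp] at ha hb hab
    rw [prod_insert hcs, prod_insert hcs]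
    exact (norm_mul_sub_mul_le_max ha.1 (norm_prod_le_one s hb.2)).trans
      (max_le hab.1 (ih ha.2 hb.2 hab.2))

lemma norm_pow_sub_pow_le {a b : R} (ha : ‖a‖ ≤ 1) (hb : ‖b‖ ≤ 1) (n : ℕ) :
    ‖a ^ n - b ^ n‖ ≤ ‖a - b‖ := by
  simpa using norm_prod_sub_prod_le (range n) (a := fun _ => a) (b := fun _ => b)
    (fun _ _ => ha) (fun _ _ => hb) (norm_nonneg _) (fun _ _ => le_rfl)

lemma norm_pow_prime_sub_pow_le {p : ℕ} (hp : p.Prime) {a b : R} (ha : ‖a‖ ≤ 1)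
    (hb : ‖b‖ ≤ 1) :
    ‖a ^ p - b ^ p‖ ≤ max (‖(p : R)‖ * ‖a - b‖) (‖a - b‖ ^ p) := by
  set h := a - b
  have hh : ‖h‖ ≤ 1 := by
    have := norm_add_le_max a (-b)
    rw [norm_neg, ← sub_eq_add_neg] at this
    exact this.trans (max_le ha hb)
  set S := ∑ k ∈ Ioo 0 p, b ^ (k - 1) * h ^ (p - k - 1) * ((p.choose k / p : ℕ) : R)
  have hS : ‖S‖ ≤ 1 := by
    refine norm_sum_le_of_forall_le_of_nonneg zero_le_one fun k _ => ?_
    refine (norm_mul_le _ _).trans (mul_le_one₀ ?_ (norm_nonneg _) (norm_natCast_le_one R _))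
    exact (norm_mul_le _ _).trans
      (mul_le_one₀ (norm_pow_le_one hb _) (norm_nonneg _) (norm_pow_le_one hh _))
  have hexpand : a ^ p - b ^ p = h ^ p + p * h * (b * S) := by
    rw [show a = b + h by ring, add_pow_prime_eq hp]
    ring
  rw [hexpand, max_comm]
  refine (norm_add_le_max _ _).trans (max_le_max (norm_pow_le _ _) ?_)
  calc ‖(p : R) * h * (b * S)‖ ≤ ‖(p : R) * h‖ * (‖b‖ * ‖S‖) :=
        (norm_mul_le _ _).trans (mul_le_mul_of_nonneg_left (norm_mul_le _ _) (norm_nonneg _))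
    _ ≤ ‖(p : R) * h‖ :=
        mul_le_of_le_one_right (norm_nonneg _) (mul_le_one₀ hb (norm_nonneg _) hS)
    _ ≤ ‖(p : R)‖ * ‖h‖ := norm_mul_le _ _

end UnitBall

section Polynomial

variable {R σ : Type*} [SeminormedCommRing R] [NormOneClass R] [IsUltrametricDist R]
  {g : MvPolynomial σ R}

lemma norm_eval_le_one (hg : ∀ d, ‖coeff d g‖ ≤ 1) {x : σ → R} (hx : ∀ i, ‖x i‖ ≤ 1) :
    ‖eval x g‖ ≤ 1 := by
  rw [eval_eq]
  refine norm_sum_le_of_forall_le_of_nonneg zero_le_one fun d _ => ?_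
  exact (norm_mul_le _ _).trans (mul_le_one₀ (hg d) (norm_nonneg _)
    (norm_prod_le_one _ fun i _ => norm_pow_le_one (hx i) _))

lemma norm_eval_sub_eval_le (hg : ∀ d, ‖coeff d g‖ ≤ 1) {x y : σ → R}
    (hx : ∀ i, ‖x i‖ ≤ 1) (hy : ∀ i, ‖y i‖ ≤ 1) {δ : ℝ} (hδ : 0 ≤ δ)
    (hxy : ∀ i, ‖x i - y i‖ ≤ δ) :
    ‖eval x g - eval y g‖ ≤ δ := by
  rw [eval_eq, eval_eq, ← sum_sub_distrib]
  refine norm_sum_le_of_forall_le_of_nonneg hδ fun d _ => ?_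
  rw [← mul_sub]
  refine (norm_mul_le _ _).trans ((mul_le_of_le_one_left (norm_nonneg _) (hg d)).trans ?_)
  exact norm_prod_sub_prod_le _ (fun i _ => norm_pow_le_one (hx i) _)
    (fun i _ => norm_pow_le_one (hy i) _) hδ
    fun i _ => (norm_pow_sub_pow_le (hx i) (hy i) _).trans (hxy i)

lemma norm_eval_pow_prime_add_C_mul_sub_le {p : ℕ} (hp : p.Prime) {ϖ : R}
    (hϖ : ‖(p : R)‖ ≤ ‖ϖ‖) {f : MvPolynomial σ R}
    (hg : ∀ d, ‖coeff d g‖ ≤ 1) (hf : ∀ d, ‖coeff d f‖ ≤ 1) {x y : σ → R}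
    (hx : ∀ i, ‖x i‖ ≤ 1) (hy : ∀ i, ‖y i‖ ≤ 1) {δ : ℝ} (hδ : 0 ≤ δ)
    (hxy : ∀ i, ‖x i - y i‖ ≤ δ) :
    ‖eval x (g ^ p + C ϖ * f) - eval y (g ^ p + C ϖ * f)‖ ≤ max (‖ϖ‖ * δ) (δ ^ p) := by
  have hgδ := norm_eval_sub_eval_le hg hx hy hδ hxy
  have hfδ := norm_eval_sub_eval_le hf hx hy hδ hxy
  have hgp := norm_pow_prime_sub_pow_le hp (norm_eval_le_one hg hx) (norm_eval_le_one hg hy)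
  simp only [map_add, map_mul, map_pow, eval_C]
  rw [add_sub_add_comm, ← mul_sub]
  refine (norm_add_le_max _ _).trans (max_le (hgp.trans (max_le_max ?_ ?_)) ?_)
  · gcongr
  · gcongr
  · exact (norm_mul_le _ _).trans ((mul_le_mul_of_nonneg_left hfδ (norm_nonneg _)).trans
      (le_max_left _ _))

end Polynomial

theorem statement7_general {K : Type*} [NontriviallyNormedField K] [IsUltrametricDist K]
    (p : ℕ) (hp : p.Prime)
    {N : ℕ} (F G f : Fin N → MvPolynomial (Fin N) K) (ϖ : K)
    (hϖ₁ : ‖(p : K)‖ ≤ ‖ϖ‖) (hϖ₂ : ‖ϖ‖ < 1)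
    (hGcoeff : ∀ i d, ‖MvPolynomial.coeff d (G i)‖ ≤ 1)
    (hfcoeff : ∀ i d, ‖MvPolynomial.coeff d (f i)‖ ≤ 1)
    (hF : ∀ i, F i = (G i) ^ p + MvPolynomial.C ϖ * f i)
    (x₀ : Fin N → K) (hx₀ : ∀ i, ‖x₀ i‖ ≤ 1)
    (x : Fin N → K) (hx : ∀ i, ‖x i‖ ≤ 1)
    (hred : ∀ i, ‖x i - x₀ i‖ < 1)
    (j : Fin N) (hjmax : ∀ i, ‖x i - x₀ i‖ ≤ ‖x j - x₀ j‖) (hne : x j ≠ x₀ j) :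
    ∀ i, ‖MvPolynomial.eval x (F i) - MvPolynomial.eval x₀ (F i)‖ < ‖x j - x₀ j‖ := by
  intro i
  set δ := ‖x j - x₀ j‖
  have hδ : 0 < δ := norm_pos_iff.mpr (sub_ne_zero.mpr hne)
  rw [hF i]
  refine (norm_eval_pow_prime_add_C_mul_sub_le hp hϖ₁ (hGcoeff i) (hfcoeff i) hx hx₀ hδ.le
    hjmax).trans_lt (max_lt ?_ ?_)
  · exact mul_lt_of_lt_one_left hδ hϖ₂
  · exact pow_lt_self_of_lt_one₀ hδ (hred j) hp.one_lt

/-- a lift of `p`-th power `F_i = G_i^p + ϖ f_i` is attracting on every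
residue disc around a fixed point `x₀ ∈ (K°)^N`: for `x ≠ x₀` in the same residue disc,
`‖F(x) - F(x₀)‖ < ‖x - x₀‖` in sup norm. -/
theorem statement7 {K : Type*} [NontriviallyNormedField K] [IsUltrametricDist K]
    [CompleteSpace K] [IsAlgClosed K]
    (p : ℕ) (hp : p.Prime) (hpnorm : ‖(p : K)‖ < 1)
    {N : ℕ} (F G f : Fin N → MvPolynomial (Fin N) K) (ϖ : K)
    (hϖ₁ : ‖(p : K)‖ ≤ ‖ϖ‖) (hϖ₂ : ‖ϖ‖ < 1)
    (hGcoeff : ∀ i d, ‖MvPolynomial.coeff d (G i)‖ ≤ 1)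
    (hfcoeff : ∀ i d, ‖MvPolynomial.coeff d (f i)‖ ≤ 1)
    (hF : ∀ i, F i = (G i) ^ p + MvPolynomial.C ϖ * f i)
    (x₀ : Fin N → K) (hx₀ : ∀ i, ‖x₀ i‖ ≤ 1)
    (hfix : ∀ i, MvPolynomial.eval x₀ (F i) = x₀ i)
    (x : Fin N → K) (hx : ∀ i, ‖x i‖ ≤ 1)
    (hred : ∀ i, ‖x i - x₀ i‖ < 1)
    (j : Fin N) (hjmax : ∀ i, ‖x i - x₀ i‖ ≤ ‖x j - x₀ j‖) (hne : x j ≠ x₀ j) :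
    ∀ i, ‖MvPolynomial.eval x (F i) - MvPolynomial.eval x₀ (F i)‖ < ‖x j - x₀ j‖ :=
  statement7_general p hp F G f ϖ hϖ₁ hϖ₂ hGcoeff hfcoeff hF x₀ hx₀ x hx hred j hjmax hne
end

section
/- Let K be a complete algebraically closed non-archimedean field with residue field k, and F a restricted lift of p-th power on A^N_K with reduction F̄ on A^N_k. Then the reduction map red : A^N_{K°} → A^N_k restricts to a bijection from Per(F) onto Per(F̄). -/
/-- The valuation ring `K° = {x : ‖x‖ ≤ 1}` of a nonarchimedean normed field. -/
def unitBallSubring (K : Type*) [NormedField K] [IsUltrametricDist K] : Subring K where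
  carrier := {x : K | ‖x‖ ≤ 1}
  one_mem' := by simp
  mul_mem' := by
    intro a b ha hb
    simp only [Set.mem_setOf_eq, norm_mul] at *
    exact mul_le_one₀ ha (norm_nonneg _) hb
  add_mem' := by
    intro a b ha hb
    exact (IsUltrametricDist.norm_add_le_max a b).trans (max_le ha hb)
  zero_mem' := by simp
  neg_mem' := by
    intro a ha
    simpa using ha

/-- The maximal ideal `K°° = {x : ‖x‖ < 1}` of the valuation ring. -/
def maxIdeal (K : Type*) [NormedField K] [IsUltrametricDist K] :
    Ideal (unitBallSubring K) where
  carrier := {x | ‖(x : K)‖ < 1}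
  add_mem' := by
    intro a b ha hb
    calc ‖((a + b : unitBallSubring K) : K)‖ = ‖(a : K) + (b : K)‖ := by norm_cast
    _ ≤ max ‖(a : K)‖ ‖(b : K)‖ := IsUltrametricDist.norm_add_le_max _ _
    _ < 1 := max_lt ha hb
  zero_mem' := by simp
  smul_mem' := by
    intro c x hx
    calc ‖((c • x : unitBallSubring K) : K)‖ = ‖(c : K)‖ * ‖(x : K)‖ := by
          simp [norm_mul]
    _ ≤ 1 * ‖(x : K)‖ := mul_le_mul_of_nonneg_right c.2 (norm_nonneg _)
    _ < 1 := by simpa using hx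

/-- Coordinatewise reduction of a point of `𝔸^N(K°)` to the residue field. -/
def redPt (K : Type*) [NormedField K] [IsUltrametricDist K] {N : ℕ}
    (x : Fin N → unitBallSubring K) : Fin N → (unitBallSubring K ⧸ maxIdeal K) :=
  fun i => Ideal.Quotient.mk (maxIdeal K) (x i)

/-- Periodic points of a self-map. -/
def perSet {X : Type*} (φ : X → X) : Set X := {x | ∃ n : ℕ, 0 < n ∧ φ^[n] x = x}

/-!
Write `F_i = G_i ^ p + ϖ f_i`. Since `‖p‖ ≤ ‖ϖ‖`, the binomial theorem gives
`‖F x - F y‖ ≤ max(‖ϖ‖, ‖x - y‖ ^ (p - 1)) · ‖x - y‖` on `(K°)^N`, so `F` and all its iterates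
are uniform contractions on every ball of radius `< 1`. The fibres of the reduction map are
exactly the residue discs `{y | ‖x - y‖ < 1}`, and reduction intertwines `F` with `F̄`.
Two distinct periodic points of `F` cannot share a residue disc, since a common period would
strictly shrink their distance; and a point of `F̄` of period `n` lifts to the fixed point of
`F^[n]` that the Banach fixed point theorem provides on a closed ball inside its residue disc.
-/

open Function Metric Set

section Dynamics

variable {X : Type*} [MetricSpace X] {Φ : X → X}

def ContractingBelowOne (Φ : X → X) : Prop :=
  ∀ d < 1, ∃ ρ : NNReal, ρ < 1 ∧ ∀ x y, dist x y ≤ d → dist (Φ x) (Φ y) ≤ ρ * dist x y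

theorem ContractingBelowOne.of_dist_le {c : ℝ} (hc : c < 1) {k : ℕ} (hk : k ≠ 0)
    (h : ∀ x y, dist (Φ x) (Φ y) ≤ max c (dist x y ^ k) * dist x y) :
    ContractingBelowOne Φ := by
  intro d hd
  refine ⟨(max c (max d 0 ^ k)).toNNReal,
    Real.toNNReal_lt_one.2 (max_lt hc (pow_lt_one₀ (le_max_right _ _) (max_lt hd one_pos) hk)),
    fun x y hxy => (h x y).trans ?_⟩
  refine mul_le_mul_of_nonneg_right ((max_le_max le_rfl ?_).trans (Real.le_coe_toNNReal _))
    dist_nonneg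
  exact pow_le_pow_left₀ dist_nonneg (hxy.trans (le_max_left _ _)) k

theorem ContractingBelowOne.iterate (h : ContractingBelowOne Φ) {n : ℕ} (hn : n ≠ 0) :
    ContractingBelowOne Φ^[n] := by
  intro d hd
  obtain ⟨ρ, hρ, hΦ⟩ := h d hd
  have hiter : ∀ m x y, dist x y ≤ d → dist (Φ^[m] x) (Φ^[m] y) ≤ ρ ^ m * dist x y := by
    intro m
    induction m with
    | zero => simp
    | succ m ih =>
      intro x y hxy
      have hm := ih x y hxy
      have hmd : dist (Φ^[m] x) (Φ^[m] y) ≤ d :=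
        (hm.trans (mul_le_of_le_one_left dist_nonneg (pow_le_one₀ ρ.2 hρ.le))).trans hxy
      rw [iterate_succ_apply', iterate_succ_apply', pow_succ', mul_assoc]
      exact (hΦ _ _ hmd).trans (mul_le_mul_of_nonneg_left hm ρ.2)
  exact ⟨ρ ^ n, pow_lt_one₀ ρ.2 hρ hn, fun x y hxy => by push_cast; exact hiter n x y hxy⟩

theorem ContractingBelowOne.one_le_dist_of_mem_periodicPts (h : ContractingBelowOne Φ)
    {x y : X} (hx : x ∈ periodicPts Φ) (hy : y ∈ periodicPts Φ) (hxy : x ≠ y) :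
    1 ≤ dist x y := by
  obtain ⟨a, ha, hax⟩ := hx
  obtain ⟨b, hb, hby⟩ := hy
  by_contra! hlt
  obtain ⟨ρ, hρ, hcontr⟩ := h.iterate (Nat.mul_ne_zero ha.ne' hb.ne') _ hlt
  have hshrink := hcontr x y le_rfl
  rw [(hax.mul_const b).eq, (hby.const_mul a).eq] at hshrink
  exact hshrink.not_gt (mul_lt_of_lt_one_left (dist_pos.2 hxy) hρ)

theorem ContractingBelowOne.exists_isFixedPt_dist_lt_one [CompleteSpace X] [IsUltrametricDist X]
    (h : ContractingBelowOne Φ) {x₀ : X} (hx₀ : dist (Φ x₀) x₀ < 1) :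
    ∃ x, IsFixedPt Φ x ∧ dist x x₀ < 1 := by
  set B := closedBall x₀ (dist (Φ x₀) x₀)
  obtain ⟨ρ, hρ, hΦ⟩ := h _ hx₀
  have hdiam : ∀ z ∈ B, ∀ w ∈ B, dist z w ≤ dist (Φ x₀) x₀ := fun z hz w hw =>
    (dist_triangle_max z x₀ w).trans (max_le hz (dist_comm w x₀ ▸ hw))
  have hmaps : MapsTo Φ B B := fun z hz =>
    (dist_triangle_max _ (Φ x₀) _).trans <| max_le
      ((hΦ z x₀ hz).trans ((mul_le_of_le_one_left dist_nonneg hρ.le).trans hz)) le_rfl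
  have : CompleteSpace B := isClosed_closedBall.completeSpace_coe
  have : Nonempty B := ⟨⟨x₀, mem_closedBall_self dist_nonneg⟩⟩
  have hcontr : ContractingWith ρ (hmaps.restrict Φ B B) :=
    ⟨hρ, LipschitzWith.of_dist_le_mul fun z w => hΦ z w (hdiam z z.2 w w.2)⟩
  exact ⟨hcontr.fixedPoint, congrArg Subtype.val hcontr.fixedPoint_isFixedPt,
    (hcontr.fixedPoint).2.trans_lt hx₀⟩

theorem bijOn_periodicPts_of_semiconj [CompleteSpace X] [IsUltrametricDist X] {Y : Type*}
    {Ψ : Y → Y} {red : X → Y} (hred : Surjective red)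
    (hred_eq : ∀ x y, red x = red y ↔ dist x y < 1) (hsemi : Semiconj red Φ Ψ)
    (hΦ : ContractingBelowOne Φ) : BijOn red (periodicPts Φ) (periodicPts Ψ) := by
  refine ⟨hsemi.mapsTo_periodicPts, fun x hx y hy hxy => ?_, ?_⟩
  · by_contra hne
    exact ((hred_eq x y).1 hxy).not_ge (hΦ.one_le_dist_of_mem_periodicPts hx hy hne)
  · rintro y ⟨n, hn, hy⟩
    obtain ⟨x₀, rfl⟩ := hred y
    have hx₀ : dist (Φ^[n] x₀) x₀ < 1 := (hred_eq _ _).1 (by rw [hsemi.iterate_right n x₀, hy.eq])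
    obtain ⟨x, hfix, hx⟩ := (hΦ.iterate hn.ne').exists_isFixedPt_dist_lt_one hx₀
    exact ⟨x, ⟨n, hn, hfix⟩, (hred_eq _ _).2 hx⟩

end Dynamics

namespace unitBallSubring

variable {K : Type*} [NormedField K] [IsUltrametricDist K]

instance [CompleteSpace K] : CompleteSpace (unitBallSubring K) :=
  (isClosed_le continuous_norm continuous_const : IsClosed {x : K | ‖x‖ ≤ 1}).completeSpace_coe

theorem dist_add_add_le (a b c d : unitBallSubring K) :
    dist (a + c) (b + d) ≤ max (dist a b) (dist c d) := by
  simp only [dist_eq_norm, add_sub_add_comm]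
  exact IsUltrametricDist.norm_add_le_max _ _

theorem dist_mul_mul_le (a b c d : unitBallSubring K) :
    dist (a * c) (b * d) ≤ max (dist a b) (dist c d) := by
  simp only [dist_eq_norm]
  calc ‖a * c - b * d‖ = ‖(a - b) * d + a * (c - d)‖ := by ring_nf
    _ ≤ max ‖(a - b) * d‖ ‖a * (c - d)‖ := IsUltrametricDist.norm_add_le_max _ _
    _ ≤ max ‖a - b‖ ‖c - d‖ := by
      rw [norm_mul, norm_mul]
      exact max_le_max (mul_le_of_le_one_right (norm_nonneg _) d.2)
        (mul_le_of_le_one_left (norm_nonneg _) a.2)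

theorem dist_pow_le {p : ℕ} (hp : p.Prime) (a b : unitBallSubring K) :
    dist (a ^ p) (b ^ p) ≤ max (‖(p : K)‖ * dist a b) (dist a b ^ p) := by
  obtain ⟨r, hr⟩ := exists_add_pow_prime_eq hp (a - b) b
  rw [sub_add_cancel] at hr
  simp only [dist_eq_norm, hr]
  calc ‖(a - b) ^ p + b ^ p + p * (a - b) * b * r - b ^ p‖
      = ‖(p : unitBallSubring K) * (a - b) * (b * r) + (a - b) ^ p‖ := by ring_nf
    _ ≤ _ := IsUltrametricDist.norm_add_le_max _ _
    _ ≤ _ := by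
      rw [norm_mul, norm_mul, norm_pow]
      exact max_le_max (mul_le_of_le_one_right (by positivity) (b * r).2) le_rfl

theorem dist_eval_le {σ : Type*} [Fintype σ] (P : MvPolynomial σ (unitBallSubring K))
    (x y : σ → unitBallSubring K) :
    dist (MvPolynomial.eval x P) (MvPolynomial.eval y P) ≤ dist x y := by
  induction P using MvPolynomial.induction_on with
  | C a => simp
  | add P Q hP hQ =>
    simp only [map_add]
    exact (dist_add_add_le _ _ _ _).trans (max_le hP hQ)
  | mul_X P i hP =>
    simp only [map_mul, MvPolynomial.eval_X]
    exact (dist_mul_mul_le _ _ _ _).trans (max_le hP (dist_le_pi_dist x y i))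

theorem dist_eval_pow_add_C_mul_le {σ : Type*} [Fintype σ] {p : ℕ} (hp : p.Prime)
    (G f : MvPolynomial σ (unitBallSubring K)) {ϖ : unitBallSubring K}
    (hϖ : ‖(p : K)‖ ≤ ‖(ϖ : K)‖) (x y : σ → unitBallSubring K) :
    dist (MvPolynomial.eval x (G ^ p + MvPolynomial.C ϖ * f))
        (MvPolynomial.eval y (G ^ p + MvPolynomial.C ϖ * f))
      ≤ max ‖(ϖ : K)‖ (dist x y ^ (p - 1)) * dist x y := by
  set D := dist x y
  have hG := dist_eval_le G x y
  have hf := dist_eval_le f x y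
  simp only [map_add, map_pow, map_mul, MvPolynomial.eval_C]
  calc _ ≤ max (max (‖(p : K)‖ * D) (D ^ p)) (‖(ϖ : K)‖ * D) := by
        refine (dist_add_add_le _ _ _ _).trans (max_le_max ?_ ?_)
        · exact (dist_pow_le hp _ _).trans (max_le_max (by gcongr) (by gcongr))
        · rw [dist_eq_norm, ← mul_sub, norm_mul, ← dist_eq_norm]
          exact mul_le_mul_of_nonneg_left hf (norm_nonneg _)
    _ ≤ max ‖(ϖ : K)‖ (D ^ (p - 1)) * D := by
      rw [max_mul_of_nonneg _ _ dist_nonneg, ← pow_succ, Nat.sub_add_cancel hp.one_le]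
      exact max_le (max_le (le_max_of_le_left (by gcongr)) (le_max_right _ _)) (le_max_left _ _)

end unitBallSubring

section Reduction

variable {K : Type*} [NormedField K] [IsUltrametricDist K] {N : ℕ}

theorem redPt_surjective : Surjective (redPt K (N := N)) :=
  Ideal.Quotient.mk_surjective.comp_left

theorem redPt_eq_redPt_iff (x y : Fin N → unitBallSubring K) :
    redPt K x = redPt K y ↔ dist x y < 1 := by
  rw [dist_pi_lt_iff one_pos]
  simp only [funext_iff, redPt, Ideal.Quotient.eq, dist_eq_norm]
  rfl

theorem redPt_eval (P : MvPolynomial (Fin N) (unitBallSubring K)) (x : Fin N → unitBallSubring K) :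
    Ideal.Quotient.mk (maxIdeal K) (MvPolynomial.eval x P)
      = MvPolynomial.eval (redPt K x) (P.map (Ideal.Quotient.mk (maxIdeal K))) :=
  MvPolynomial.map_eval _ _ _

end Reduction

theorem statement8_general {K : Type*} [NontriviallyNormedField K] [IsUltrametricDist K]
    [CompleteSpace K]
    (p : ℕ) (hp : p.Prime)
    {N : ℕ} (F G f : Fin N → MvPolynomial (Fin N) (unitBallSubring K))
    (ϖ : unitBallSubring K) (hϖ₁ : ‖(p : K)‖ ≤ ‖(ϖ : K)‖) (hϖ₂ : ‖(ϖ : K)‖ < 1)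
    (hF : ∀ i, F i = (G i) ^ p + MvPolynomial.C ϖ * f i)
    (Φ : (Fin N → unitBallSubring K) → (Fin N → unitBallSubring K))
    (hΦ : ∀ x i, Φ x i = MvPolynomial.eval x (F i))
    (Φbar : (Fin N → (unitBallSubring K ⧸ maxIdeal K)) →
      (Fin N → (unitBallSubring K ⧸ maxIdeal K)))
    (hΦbar : ∀ y i, Φbar y i =
      MvPolynomial.eval y ((F i).map (Ideal.Quotient.mk (maxIdeal K)))) :
    Set.BijOn (redPt K) (perSet Φ) (perSet Φbar) := by
  have hsemi : Semiconj (redPt K) Φ Φbar := fun x => funext fun i => by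
    rw [hΦbar, ← redPt_eval, ← hΦ]
    rfl
  have hcontr : ContractingBelowOne Φ :=
    .of_dist_le hϖ₂ (Nat.sub_ne_zero_of_lt hp.one_lt) fun x y =>
      (dist_pi_le_iff (by positivity)).2 fun i => by
        rw [hΦ, hΦ, hF]
        exact unitBallSubring.dist_eval_pow_add_C_mul_le hp _ _ hϖ₁ x y
  exact bijOn_periodicPts_of_semiconj redPt_surjective redPt_eq_redPt_iff hsemi hcontr

/-- for a restricted lift of `p`-th power `F` (of the explicit shape
`F_i = G_i^p + ϖ f_i` with `G_i = Σ_j c_{i,j} X_i^{q_{i,j}}`, `‖c_{i,j}‖ = 1`, the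
`q_{i,j}` strictly increasing powers of `p`), the reduction map gives a bijection from
`Per(F)` onto `Per(F̄)`, where `F̄` is the reduction of `F` modulo `K°°`. -/
theorem statement8 {K : Type*} [NontriviallyNormedField K] [IsUltrametricDist K]
    [CompleteSpace K] [IsAlgClosed K]
    (p : ℕ) (hp : p.Prime) (hpnorm : ‖(p : K)‖ < 1)
    {N : ℕ} (F G f : Fin N → MvPolynomial (Fin N) (unitBallSubring K))
    (ϖ : unitBallSubring K) (hϖ₁ : ‖(p : K)‖ ≤ ‖(ϖ : K)‖) (hϖ₂ : ‖(ϖ : K)‖ < 1)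
    (m : Fin N → ℕ) (hm : ∀ i, 0 < m i)
    (c : Fin N → ℕ → unitBallSubring K) (q : Fin N → ℕ → ℕ)
    (hc : ∀ i j, j < m i → ‖((c i j : K))‖ = 1)
    (hq : ∀ i j, j < m i → ∃ e : ℕ, q i j = p ^ e)
    (hqmono : ∀ i j j', j < j' → j' < m i → q i j < q i j')
    (hG : ∀ i, G i = ∑ j ∈ Finset.range (m i),
      MvPolynomial.C (c i j) * MvPolynomial.X i ^ (q i j))
    (hdeg : ∀ i, (f i).totalDegree < ((G i) ^ p).totalDegree)
    (hF : ∀ i, F i = (G i) ^ p + MvPolynomial.C ϖ * f i)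
    (Φ : (Fin N → unitBallSubring K) → (Fin N → unitBallSubring K))
    (hΦ : ∀ x i, Φ x i = MvPolynomial.eval x (F i))
    (Φbar : (Fin N → (unitBallSubring K ⧸ maxIdeal K)) →
      (Fin N → (unitBallSubring K ⧸ maxIdeal K)))
    (hΦbar : ∀ y i, Φbar y i =
      MvPolynomial.eval y ((F i).map (Ideal.Quotient.mk (maxIdeal K)))) :
    Set.BijOn (redPt K) (perSet Φ) (perSet Φbar) :=
  statement8_general p hp F G f ϖ hϖ₁ hϖ₂ hF Φ hΦ Φbar hΦbar
end

section
/- Let k be a field, u an element of a complete non-archimedean valued field extension with 0 < |u| < 1, and g = Σ_{i=0}^∞ g_i u^i ∈ K^{♭,°}⟨X_1,...,X_N⟩ with g_i ∈ k[X_1,...,X_N] (viewing k inside the valuation ring). Then there exists ε > 0, depending only on g, such that for every x ∈ k^N either g(x) = 0 or |g(x)| > ε. -/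
/-!
Since `k[X_1, …, X_N]` is Noetherian, the ideal generated by all the `g_i` is generated by
`g_0, …, g_M` for some `M`; hence if `g(x) ≠ 0` then `g_j(x) ≠ 0` for some `j ≤ M`. For the
least such `j` the term `g_j(x) u^j` has norm `|u|^j`, strictly larger than every later term,
so by the ultrametric inequality `|g(x)| = |u|^j ≥ |u|^M > |u|^(M+1)`.
-/

theorem IsNoetherianRing.exists_forall_mem_span_image_Iic {R : Type*} [CommSemiring R]
    [IsNoetherianRing R] (g : ℕ → R) : ∃ M, ∀ n, g n ∈ Ideal.span (g '' Set.Iic M) := by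
  have hmono : Monotone fun M : ℕ => Ideal.span (g '' Set.Iic M) := fun a b hab =>
    Ideal.span_mono (Set.image_mono (Set.Iic_subset_Iic.mpr hab))
  obtain ⟨M, hM⟩ := monotone_stabilizes_iff_noetherian.mpr ‹IsNoetherianRing R› ⟨_, hmono⟩
  refine ⟨M, fun n => ?_⟩
  have hstable : Ideal.span (g '' Set.Iic M) = Ideal.span (g '' Set.Iic (max n M)) :=
    hM _ (le_max_right n M)
  rw [hstable]
  exact Ideal.subset_span ⟨n, Set.mem_Iic.mpr (le_max_left n M), rfl⟩

theorem IsNoetherianRing.exists_forall_map_eq_zero_of_forall_le {R S : Type*} [CommSemiring R]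
    [IsNoetherianRing R] [Semiring S] (g : ℕ → R) :
    ∃ M, ∀ φ : R →+* S, (∀ i ≤ M, φ (g i) = 0) → ∀ n, φ (g n) = 0 := by
  obtain ⟨M, hM⟩ := exists_forall_mem_span_image_Iic g
  refine ⟨M, fun φ hφ n => ?_⟩
  have hspan : Ideal.span (g '' Set.Iic M) ≤ RingHom.ker φ := by
    rw [Ideal.span_le]
    rintro _ ⟨i, hi, rfl⟩
    exact hφ i hi
  exact hspan (hM n)

namespace IsUltrametricDist

theorem norm_tsum_eq_of_eq_zero_of_norm_le {E : Type*} [NormedAddCommGroup E]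
    [IsUltrametricDist E] {f : ℕ → E} {j : ℕ} {C : ℝ} (hf : Summable f)
    (hlt : ∀ i < j, f i = 0) (hgt : ∀ i > j, ‖f i‖ ≤ C) (hC : C < ‖f j‖) :
    ‖∑' i, f i‖ = ‖f j‖ := by
  have hhead : ∑ i ∈ Finset.range (j + 1), f i = f j := by
    rw [Finset.sum_range_succ, Finset.sum_eq_zero fun i hi => hlt i (Finset.mem_range.mp hi),
      zero_add]
  have htail : ‖∑' i, f (i + (j + 1))‖ < ‖f j‖ :=
    (norm_tsum_le_of_forall_le_of_nonneg ((norm_nonneg _).trans (hgt (j + 1) j.lt_succ_self))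
      fun i => hgt _ (by omega)).trans_lt hC
  rw [← hf.sum_add_tsum_nat_add (j + 1), hhead, norm_add_eq_max_of_norm_ne_norm htail.ne',
    max_eq_left htail.le]

end IsUltrametricDist

section ZeroOneCoefficients

variable {K : Type*} [NormedField K] {a : ℕ → K} {u : K}

theorem norm_mul_pow_le_of_norm_eq_one (ha : ∀ i, a i ≠ 0 → ‖a i‖ = 1) (hu0 : 0 ≤ ‖u‖) (i : ℕ) :
    ‖a i * u ^ i‖ ≤ ‖u‖ ^ i := by
  rw [norm_mul, norm_pow]
  by_cases h : a i = 0
  · simp [h, pow_nonneg hu0]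
  · rw [ha i h, one_mul]

theorem summable_mul_pow_of_norm_eq_one [CompleteSpace K] (ha : ∀ i, a i ≠ 0 → ‖a i‖ = 1)
    (hu1 : ‖u‖ < 1) : Summable fun i => a i * u ^ i :=
  .of_norm_bounded (summable_geometric_of_lt_one (norm_nonneg u) hu1)
    (norm_mul_pow_le_of_norm_eq_one ha (norm_nonneg u))

variable [IsUltrametricDist K] [CompleteSpace K]

theorem norm_tsum_mul_pow_eq_of_norm_eq_one (ha : ∀ i, a i ≠ 0 → ‖a i‖ = 1) (hu0 : 0 < ‖u‖)
    (hu1 : ‖u‖ < 1) {j : ℕ} (hj : a j ≠ 0) (hlt : ∀ i < j, a i = 0) :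
    ‖∑' i, a i * u ^ i‖ = ‖u‖ ^ j := by
  have hj' : ‖a j * u ^ j‖ = ‖u‖ ^ j := by rw [norm_mul, norm_pow, ha j hj, one_mul]
  rw [← hj']
  refine IsUltrametricDist.norm_tsum_eq_of_eq_zero_of_norm_le
    (summable_mul_pow_of_norm_eq_one ha hu1) (fun i hi => by simp [hlt i hi])
    (fun i hi => (norm_mul_pow_le_of_norm_eq_one ha hu0.le i).trans
      (pow_le_pow_of_le_one hu0.le hu1.le hi)) ?_
  rw [hj']
  exact pow_lt_pow_right_of_lt_one₀ hu0 hu1 j.lt_succ_self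

theorem pow_le_norm_tsum_mul_pow_of_norm_eq_one (ha : ∀ i, a i ≠ 0 → ‖a i‖ = 1) (hu0 : 0 < ‖u‖)
    (hu1 : ‖u‖ < 1) {M : ℕ} (h : ∃ i ≤ M, a i ≠ 0) :
    ‖u‖ ^ M ≤ ‖∑' i, a i * u ^ i‖ := by
  classical
  have hex : ∃ i, a i ≠ 0 := h.imp fun _ => And.right
  obtain ⟨i, hiM, hi⟩ := h
  rw [norm_tsum_mul_pow_eq_of_norm_eq_one ha hu0 hu1 (Nat.find_spec hex)
    fun i hi => not_not.mp (Nat.find_min hex hi)]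
  exact pow_le_pow_of_le_one hu0.le hu1.le ((Nat.find_min' hex hi).trans hiM)

end ZeroOneCoefficients

/-- let `g = Σ_i g_i u^i` with `g_i ∈ k[X_1,...,X_N]` (the residue field `k`
embedded in the valuation ring of `K`, so nonzero elements of `k` have norm `1`) and
`0 < ‖u‖ < 1`. Then there is `ε > 0`, depending only on `g`, so that for every `x ∈ k^N`
either `g(x) = 0` or `‖g(x)‖ > ε`. -/
theorem statement10 {K : Type*} [NontriviallyNormedField K] [IsUltrametricDist K]
    [CompleteSpace K]
    {k : Type*} [Field k] (ι : k →+* K) (hι : ∀ a : k, a ≠ 0 → ‖ι a‖ = 1)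
    {N : ℕ} (u : K) (hu0 : 0 < ‖u‖) (hu1 : ‖u‖ < 1)
    (g : ℕ → MvPolynomial (Fin N) k) :
    ∃ ε > (0 : ℝ), ∀ x : Fin N → k,
      (∑' i : ℕ, ι (MvPolynomial.eval x (g i)) * u ^ i) = 0 ∨
      ε < ‖∑' i : ℕ, ι (MvPolynomial.eval x (g i)) * u ^ i‖ := by
  obtain ⟨M, hM⟩ := IsNoetherianRing.exists_forall_map_eq_zero_of_forall_le (S := k) g
  refine ⟨‖u‖ ^ (M + 1), pow_pos hu0 _, fun x => ?_⟩
  have ha : ∀ i, ι (MvPolynomial.eval x (g i)) ≠ 0 → ‖ι (MvPolynomial.eval x (g i))‖ = 1 :=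
    fun i h => hι _ fun h0 => h (by rw [h0, map_zero])
  by_cases hzero : ∀ i ≤ M, MvPolynomial.eval x (g i) = 0
  · left
    simp [hM (MvPolynomial.eval x) hzero]
  · right
    push Not at hzero
    obtain ⟨i, hiM, hi⟩ := hzero
    calc ‖u‖ ^ (M + 1) < ‖u‖ ^ M := pow_lt_pow_right_of_lt_one₀ hu0 hu1 M.lt_succ_self
      _ ≤ _ := pow_le_norm_tsum_mul_pow_of_norm_eq_one ha hu0 hu1
          ⟨i, hiM, (map_ne_zero ι).mpr hi⟩
end

section
/- Let f : A^2_C → A^2_C be the map f(x, y) = (x^2, x^3), let b_0 = (1,1) (a fixed point of f), and let V ⊆ A^2 be the diagonal. Then there exists a sequence (b_i)_{i≥0} with b_i ∈ f^{-i}(b_0) for each i (a non-coherent backward orbit), such that the set {i : b_i ∈ V} equals {2^j : j ≥ 0} ∪ {0}, which is not a finite union of arithmetic progressions. -/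
open Classical in
private noncomputable def stmt16b (i : ℕ) : ℂ × ℂ :=
  if i = 0 ∨ ∃ j : ℕ, i = 2 ^ j then (1, 1) else (1, 2)

private lemma stmt16_iter_one (i : ℕ) :
    (fun p : ℂ × ℂ => (p.1 ^ 2, p.1 ^ 3))^[i] (1, 1) = (1, 1) := by
  induction i with
  | zero => rfl
  | succ n ih => rw [Function.iterate_succ_apply]; simpa using ih

/-- for `f(x,y) = (x², x³)` on `𝔸²_ℂ` with fixed point `b₀ = (1,1)` and `V`
the diagonal, there is a (non-coherent) backward orbit `(b_i)` of `b₀` — i.e.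
`f^[i](b_i) = b₀` — such that `{i : b_i ∈ V} = {0} ∪ {2^j : j ≥ 0}`, which is not a
finite union of arithmetic progressions. -/
theorem statement16 :
    ∃ b : ℕ → ℂ × ℂ,
      b 0 = (1, 1) ∧
      (∀ i : ℕ, (fun p : ℂ × ℂ => (p.1 ^ 2, p.1 ^ 3))^[i] (b i) = (1, 1)) ∧
      {i : ℕ | (b i).1 = (b i).2} = {0} ∪ {i : ℕ | ∃ j : ℕ, i = 2 ^ j} ∧
      ¬ ∃ (m : ℕ) (a c : Fin m → ℕ),
        {i : ℕ | (b i).1 = (b i).2} =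
          ⋃ t : Fin m, {x : ℕ | ∃ k : ℕ, x = a t * k + c t} := by
  classical
  refine ⟨stmt16b, ?_, ?_, ?_, ?_⟩
  · simp [stmt16b]
  · intro i
    by_cases h : i = 0 ∨ ∃ j : ℕ, i = 2 ^ j
    · rw [stmt16b, if_pos h]; exact stmt16_iter_one i
    · rw [stmt16b, if_neg h]
      have hi : i ≠ 0 := fun h0 => h (Or.inl h0)
      obtain ⟨n, rfl⟩ := Nat.exists_eq_succ_of_ne_zero hi
      rw [Function.iterate_succ_apply]
      simpa using stmt16_iter_one n
  · ext i
    by_cases h : i = 0 ∨ ∃ j : ℕ, i = 2 ^ j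
    · simp only [Set.mem_setOf_eq, stmt16b, if_pos h, Set.mem_union,
        Set.mem_singleton_iff]
      simpa using h
    · simp only [Set.mem_setOf_eq, stmt16b, if_neg h, Set.mem_union,
        Set.mem_singleton_iff]
      constructor
      · intro h12; norm_num at h12
      · intro h'; exact absurd h' h
  · -- {0} ∪ {2^j} is not a finite union of arithmetic progressions
    have hset : {i : ℕ | (stmt16b i).1 = (stmt16b i).2} =
        {0} ∪ {i : ℕ | ∃ j : ℕ, i = 2 ^ j} := by
      ext i
      by_cases h : i = 0 ∨ ∃ j : ℕ, i = 2 ^ j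
      · simp only [Set.mem_setOf_eq, stmt16b, if_pos h, Set.mem_union,
          Set.mem_singleton_iff]
        simpa using h
      · simp only [Set.mem_setOf_eq, stmt16b, if_neg h, Set.mem_union,
          Set.mem_singleton_iff]
        constructor
        · intro h12; norm_num at h12
        · intro h'; exact absurd h' h
    rintro ⟨m, a, c, hS⟩
    rw [hset] at hS
    have hmemS : ∀ x : ℕ, (x = 0 ∨ ∃ j : ℕ, x = 2 ^ j) ↔
        ∃ t : Fin m, ∃ k : ℕ, x = a t * k + c t := by
      intro x
      have := Set.ext_iff.mp hS x
      simpa [Set.mem_union, Set.mem_iUnion, Set.mem_setOf_eq] using this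
    by_cases ha : ∃ t : Fin m, a t ≠ 0
    · obtain ⟨t, hat⟩ := ha
      have hA : 1 ≤ a t := Nat.one_le_iff_ne_zero.mpr hat
      set A := a t with hAdef
      set C := c t with hCdef
      have hin : ∀ k : ℕ, A * k + C = 0 ∨ ∃ j : ℕ, A * k + C = 2 ^ j := by
        intro k
        exact (hmemS (A * k + C)).mpr ⟨t, k, rfl⟩
      set k₀ := A + C + 1 with hk0
      have hx : A * k₀ + C = 0 ∨ ∃ j, A * k₀ + C = 2 ^ j := hin k₀
      have hy : A * (k₀ + 1) + C = 0 ∨ ∃ j, A * (k₀ + 1) + C = 2 ^ j := hin (k₀ + 1)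
      have hxbig : A < A * k₀ + C := by
        have : k₀ ≤ A * k₀ := Nat.le_mul_of_pos_left k₀ hA
        omega
      obtain ⟨p, hp⟩ : ∃ j, A * k₀ + C = 2 ^ j := by
        rcases hx with h0 | h; · omega
        · exact h
      obtain ⟨q, hq⟩ : ∃ j, A * (k₀ + 1) + C = 2 ^ j := by
        rcases hy with h0 | h
        · exfalso; nlinarith
        · exact h
      have hlt : 2 ^ p < 2 ^ q := by nlinarith
      have hpq : p < q := (Nat.pow_lt_pow_iff_right (by norm_num)).mp hlt
      have h2 : 2 ^ (p + 1) ≤ 2 ^ q := Nat.pow_le_pow_right (by norm_num) hpq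
      have : 2 ^ q = 2 ^ p + A := by nlinarith
      have hApow : A < 2 ^ p := by omega
      have : 2 ^ (p + 1) = 2 * 2 ^ p := by ring
      omega
    · push_neg at ha
      -- every a t = 0, so the union is finite, but {2^j} is infinite; pigeonhole
      have hmem : ∀ j : ℕ, ∃ t : Fin m, ∃ k : ℕ, 2 ^ j = a t * k + c t := by
        intro j
        exact (hmemS (2 ^ j)).mp (Or.inr ⟨j, rfl⟩)
      choose T K hTK using hmem
      have hval : ∀ j : ℕ, 2 ^ j = c (T j) := by
        intro j
        have := hTK j
        rw [ha (T j)] at this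
        simpa using this
      obtain ⟨j₁, hj₁, j₂, hj₂, hne, heq⟩ :=
        Finset.exists_ne_map_eq_of_card_lt_of_maps_to
          (s := Finset.range (m + 1)) (t := (Finset.univ : Finset (Fin m)))
          (by simp) (fun j _ => Finset.mem_univ (T j))
      have : (2 : ℕ) ^ j₁ = 2 ^ j₂ := by rw [hval j₁, hval j₂, heq]
      exact hne (Nat.pow_right_injective (by norm_num) this)
end
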